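/- Let n ≥ 3 and T ⊆ {1,…,n} with {n−1, n} ⊆ T. If |T| is odd, the geometric realization of the induced subcomplex K'_{χ',T} is homotopy equivalent to the sphere S^{|T|−1}. If |T| is even, the geometric realization of K'_{χ',T} is contractible. -/

import Mathlib

/-- The `(i,j)` entry of the characteristic matrix `χ'` of the small cover over
`P₅ × I^{n−2}` (rows `1,…,n`, columns `1,…,2n+1`): row `i` has `1`'s exactly at positions
`i`, `n+i` and `2n+1`. -/
def chi'Entry (n i j : ℕ) : ZMod 2 :=
  if j = i ∨ j = n + i ∨ j = 2 * n + 1 then 1 else 0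

/-- The support of `χ'_T = ∑_{i∈T} (row i of χ')`, as a subset of `{1,…,2n+1}`. -/
def chi'Supp (n : ℕ) (T : Finset ℕ) : Finset ℕ :=
  (Finset.Icc 1 (2 * n + 1)).filter (fun j => (∑ i ∈ T, chi'Entry n i j) ≠ 0)

/-- The vertex set of the 5-cycle `C₅`, in cyclic order `n−1, n, 2n−1, 2n, 2n+1`. -/
def pentCyc (n : ℕ) : Finset ℕ := {n - 1, n, 2 * n - 1, 2 * n, 2 * n + 1}

/-- The edges of the 5-cycle `C₅` with vertices `n−1, n, 2n−1, 2n, 2n+1` in cyclic order. -/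
def pentEdges (n : ℕ) : Finset (Finset ℕ) :=
  {{n - 1, n}, {n, 2 * n - 1}, {2 * n - 1, 2 * n}, {2 * n, 2 * n + 1}, {2 * n + 1, n - 1}}

/-- Faces of `K'`, the simplicial join of the 5-cycle `C₅` (on vertices
`n−1, n, 2n−1, 2n, 2n+1`) with the boundary complex of the `(n−2)`-dimensional cross
polytope on `{1,…,n−2} ∪ {n+1,…,2n−2}` with antipodal pairs `{i, n+i}` (`1 ≤ i ≤ n−2`):
`t` is a face iff its intersection with the cycle is a face of the cycle (empty, a vertex,
or an edge) and it contains no antipodal pair. -/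
def pentFace (n : ℕ) (t : Finset ℕ) : Prop :=
  t ⊆ Finset.Icc 1 (2 * n + 1) ∧
  (∀ i ∈ Finset.Icc 1 (n - 2), ¬(i ∈ t ∧ n + i ∈ t)) ∧
  (t ∩ pentCyc n = ∅ ∨ (∃ a ∈ pentCyc n, t ∩ pentCyc n = {a}) ∨ t ∩ pentCyc n ∈ pentEdges n)

/-- The geometric realization of an abstract simplicial complex with vertices among
`{0,…,m−1}`, whose faces are given by the predicate `K`: the space of convex weight
functions whose support is a face of `K`. -/
abbrev GeomReal (m : ℕ) (K : Finset ℕ → Prop) : Type :=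
  {f : Fin m → ℝ // (∀ v, 0 ≤ f v) ∧ (∑ v, f v = 1) ∧
    K ((Finset.univ.filter (fun v => f v ≠ 0)).image Fin.val)}

/-!
Write `V` for the vertex set `T ∪ (n + T)` of `K'_{χ',T}`, together with `2n + 1` when `|T|` is
odd. `K'` is a flag complex, so `K'_{χ',T}` is the flag complex on `V` whose missing edges are the
antipodal pairs `{i, n + i}` and the diagonals of the pentagon.

If `|T|` is odd, the vectors `i ↦ eᵢ`, `n + i ↦ -eᵢ` (`i ∈ T`) and `2n + 1 ↦ e_{n-1} - e_n` realize
`K'_{χ',T}` as a complete simplicial fan in `ℝ^T`: the boundary of the cross polytope with its edge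
`{n - 1, 2n}` stellarly subdivided. Radial projection is then a homeomorphism from the geometric
realization onto the unit sphere. Its inverse sends `u` to the weights `uᵢ⁺` on `i` and `uᵢ⁻` on
`n + i`, except that `s = min u_{n-1}⁺ u_n⁻` is taken off the two ends of the subdivided edge and
put on `2n + 1`.

If `|T|` is even, the pentagon loses `2n + 1` and becomes the path `n - 1, n, 2n - 1, 2n`.
Pushing the weight of `2n` onto `2n - 1` is homotopic to the identity, and its image lies in the
star of `n`, so it is homotopic to the constant map at `n`; both homotopies are straight lines.
-/

open Finset

noncomputable section

namespace GeomReal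

variable {m : ℕ} {K : Finset ℕ → Prop}

def weightSupport (f : Fin m → ℝ) : Finset ℕ :=
  (univ.filter (fun v => f v ≠ 0)).image Fin.val

def zeroExtend (f : Fin m → ℝ) (j : ℕ) : ℝ :=
  if h : j < m then f ⟨j, h⟩ else 0

@[simp]
lemma zeroExtend_val (f : Fin m → ℝ) (v : Fin m) : zeroExtend f v = f v := by
  simp [zeroExtend]

lemma continuous_zeroExtend_apply (j : ℕ) : Continuous fun f : Fin m → ℝ => zeroExtend f j := by
  unfold zeroExtend; split_ifs <;> fun_prop

lemma mem_weightSupport {f : Fin m → ℝ} {j : ℕ} :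
    j ∈ weightSupport f ↔ zeroExtend f j ≠ 0 := by
  unfold weightSupport zeroExtend
  constructor
  · rintro hj
    obtain ⟨v, hv, rfl⟩ := mem_image.1 hj
    simpa using hv
  · intro hj
    split_ifs at hj with h
    · exact mem_image.2 ⟨⟨j, h⟩, by simpa using hj, rfl⟩
    · exact absurd rfl hj

lemma val_mem_weightSupport {f : Fin m → ℝ} {v : Fin m} :
    (v : ℕ) ∈ weightSupport f ↔ f v ≠ 0 := by
  rw [mem_weightSupport, zeroExtend_val]

lemma weightSupport_smul {c : ℝ} (hc : c ≠ 0) (f : Fin m → ℝ) :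
    weightSupport (c • f) = weightSupport f := by
  ext j
  simp [mem_weightSupport, zeroExtend, hc]

lemma weightSupport_single (b : Fin m) : weightSupport (Pi.single b (1 : ℝ)) = {(b : ℕ)} := by
  ext j
  simp only [mem_weightSupport, zeroExtend, mem_singleton]
  split_ifs with h
  · rw [Pi.single_apply]; simp [Fin.ext_iff]
  · simp only [ne_eq, not_true_eq_false, false_iff]; omega

lemma weightSupport_add_smul_subset (f g : Fin m → ℝ) (s t : ℝ) :
    weightSupport (s • f + t • g) ⊆ weightSupport f ∪ weightSupport g := by
  intro j hj
  rw [mem_union, mem_weightSupport, mem_weightSupport]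
  rw [mem_weightSupport] at hj
  contrapose! hj
  unfold zeroExtend at *
  split_ifs at * <;> simp_all

theorem homotopic_of_face_union (hK : Antitone K) {X : Type*}
    [TopologicalSpace X] (F G : C(X, GeomReal m K))
    (hFG : ∀ x, K (weightSupport (F x).1 ∪ weightSupport (G x).1)) : F.Homotopic G := by
  let H : unitInterval × X → GeomReal m K := fun p =>
    ⟨(1 - (p.1 : ℝ)) • (F p.2).1 + (p.1 : ℝ) • (G p.2).1, fun v => by
      have := (F p.2).2.1 v; have := (G p.2).2.1 v; have := p.1.2.1; have := p.1.2.2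
      simp only [Pi.add_apply, Pi.smul_apply, smul_eq_mul]
      nlinarith, by
      simp only [Pi.add_apply, Pi.smul_apply, smul_eq_mul, sum_add_distrib, ← mul_sum,
        (F p.2).2.2.1, (G p.2).2.2.1]
      ring, hK (weightSupport_add_smul_subset _ _ _ _) (hFG p.2)⟩
  exact ⟨⟨⟨H, by fun_prop⟩, fun x => by simp [H], fun x => by simp [H]⟩⟩

def vertex (b : Fin m) (hb : K {(b : ℕ)}) : GeomReal m K :=
  ⟨Pi.single b 1, fun v => by by_cases h : v = b <;> simp [h],
    by simp, by rw [← weightSupport, weightSupport_single]; exact hb⟩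

lemma weightSupport_vertex (b : Fin m) (hb : K {(b : ℕ)}) :
    weightSupport (vertex b hb).1 = {(b : ℕ)} :=
  weightSupport_single b

def moveMass (a b : Fin m) (f : Fin m → ℝ) : Fin m → ℝ :=
  f + Pi.single b (f a) - Pi.single a (f a)

lemma moveMass_apply_self {a b : Fin m} (hab : a ≠ b) (f : Fin m → ℝ) : moveMass a b f a = 0 := by
  simp [moveMass, hab]

lemma moveMass_apply_of_ne {a b v : Fin m} (ha : v ≠ a) (hb : v ≠ b) (f : Fin m → ℝ) :
    moveMass a b f v = f v := by
  simp [moveMass, ha, hb]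

lemma moveMass_of_eq_zero {a : Fin m} (b : Fin m) {f : Fin m → ℝ} (h : f a = 0) :
    moveMass a b f = f := by
  simp [moveMass, h]

lemma sum_moveMass (a b : Fin m) (f : Fin m → ℝ) : ∑ v, moveMass a b f v = ∑ v, f v := by
  simp [moveMass, sum_add_distrib, sum_sub_distrib]

lemma moveMass_nonneg {a b : Fin m} {f : Fin m → ℝ} (hf : ∀ v, 0 ≤ f v) (v : Fin m) :
    0 ≤ moveMass a b f v := by
  by_cases ha : v = a
  · subst ha
    by_cases hb : v = b
    · subst hb; simpa [moveMass] using hf v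
    · simp [moveMass, hb]
  · by_cases hb : v = b
    · subst hb; simpa [moveMass, ha] using add_nonneg (hf v) (hf a)
    · simpa [moveMass_apply_of_ne ha hb] using hf v

lemma weightSupport_moveMass_subset (a b : Fin m) (f : Fin m → ℝ) :
    weightSupport (moveMass a b f) ⊆ insert (b : ℕ) (weightSupport f) := by
  intro j hj
  rw [mem_insert]
  obtain ⟨v, hv, rfl⟩ := mem_image.1 hj
  have hv : moveMass a b f v ≠ 0 := (mem_filter.1 hv).2
  by_cases hvb : v = b
  · exact Or.inl (congrArg Fin.val hvb)
  by_cases hva : v = a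
  · subst hva; exact absurd (moveMass_apply_self hvb f) hv
  · exact Or.inr (val_mem_weightSupport.2 (by rwa [moveMass_apply_of_ne hva hvb] at hv))

lemma continuous_moveMass (a b : Fin m) : Continuous (moveMass a b) := by
  refine continuous_pi fun v => ?_
  simp only [moveMass, Pi.add_apply, Pi.sub_apply, Pi.single_apply]
  split_ifs <;> fun_prop

section moveMassMap

variable (hK : Antitone K) (a b : Fin m)
  (hab : ∀ f : GeomReal m K, f.1 a ≠ 0 → K (insert (b : ℕ) (weightSupport f.1)))
include hK hab

lemma face_union_moveMass (f : GeomReal m K) :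
    K (weightSupport f.1 ∪ weightSupport (moveMass a b f.1)) := by
  by_cases ha : f.1 a = 0
  · rw [moveMass_of_eq_zero b ha, union_self]; exact f.2.2.2
  · exact hK (union_subset (subset_insert _ _) (weightSupport_moveMass_subset a b f.1)) (hab f ha)

def moveMassMap : C(GeomReal m K, GeomReal m K) where
  toFun f := ⟨moveMass a b f.1, moveMass_nonneg f.2.1, by rw [sum_moveMass, f.2.2.1],
    hK subset_union_right (face_union_moveMass hK a b hab f)⟩
  continuous_toFun := by
    have := continuous_moveMass a b
    fun_prop

theorem id_homotopic_moveMassMap : (ContinuousMap.id _).Homotopic (moveMassMap hK a b hab) :=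
  homotopic_of_face_union hK _ _ (face_union_moveMass hK a b hab)

end moveMassMap

section sphere

variable {E : Type*} [NormedAddCommGroup E] [NormedSpace ℝ E]

lemma sum_pos_of_ne_zero {Φ : (Fin m → ℝ) → E} {W : E → Fin m → ℝ}
    (hΦ_smul : ∀ c : ℝ, 0 ≤ c → ∀ f, Φ (c • f) = c • Φ f) (hW_nonneg : ∀ u v, 0 ≤ W u v)
    (hΦW : ∀ u, Φ (W u) = u) {u : E} (hu : u ≠ 0) : 0 < ∑ v, W u v := by
  refine (sum_nonneg fun v _ => hW_nonneg u v).lt_of_ne fun h => hu ?_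
  have hW0 : W u = 0 := funext fun v => (sum_eq_zero_iff_of_nonneg fun v _ => hW_nonneg u v).1
    h.symm v (mem_univ v)
  rw [← hΦW u, hW0, ← zero_smul ℝ (0 : Fin m → ℝ), hΦ_smul 0 le_rfl, zero_smul]

lemma map_ne_zero {Φ : (Fin m → ℝ) → E} {W : E → Fin m → ℝ}
    (hW_smul : ∀ c : ℝ, 0 ≤ c → ∀ u, W (c • u) = c • W u)
    (hWΦ : ∀ f : GeomReal m K, W (Φ f.1) = f.1) (f : GeomReal m K) : Φ f.1 ≠ 0 := by
  intro h
  have hf : f.1 = 0 := by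
    rw [← hWΦ f, h, ← zero_smul ℝ (0 : E), hW_smul 0 le_rfl, zero_smul]
  simpa [hf] using f.2.2.1

def normalize (g : Fin m → ℝ) (hg : ∀ v, 0 ≤ g v) (hsum : 0 < ∑ v, g v)
    (hgK : K (weightSupport g)) : GeomReal m K :=
  ⟨(∑ v, g v)⁻¹ • g, fun v => mul_nonneg (inv_nonneg.2 hsum.le) (hg v),
    by simp [← mul_sum, hsum.ne'],
    by rw [← weightSupport, weightSupport_smul (inv_ne_zero hsum.ne')]; exact hgK⟩

def homeomorphSphere (Φ : (Fin m → ℝ) → E) (W : E → Fin m → ℝ)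
    (hΦ : Continuous Φ) (hW : Continuous W)
    (hΦ_smul : ∀ c : ℝ, 0 ≤ c → ∀ f, Φ (c • f) = c • Φ f)
    (hW_smul : ∀ c : ℝ, 0 ≤ c → ∀ u, W (c • u) = c • W u)
    (hW_nonneg : ∀ u v, 0 ≤ W u v) (hWK : ∀ u, K (weightSupport (W u)))
    (hΦW : ∀ u, Φ (W u) = u) (hWΦ : ∀ f : GeomReal m K, W (Φ f.1) = f.1) :
    GeomReal m K ≃ₜ Metric.sphere (0 : E) 1 where
  toFun f := ⟨‖Φ f.1‖⁻¹ • Φ f.1, by simp [norm_smul, map_ne_zero hW_smul hWΦ f]⟩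
  invFun u := normalize (W u) (hW_nonneg u)
    (sum_pos_of_ne_zero hΦ_smul hW_nonneg hΦW (ne_zero_of_mem_sphere one_ne_zero u)) (hWK u)
  left_inv f := by
    have hΦf := norm_pos_iff.2 (map_ne_zero hW_smul hWΦ f)
    have hWf : W (‖Φ f.1‖⁻¹ • Φ f.1) = ‖Φ f.1‖⁻¹ • f.1 := by
      rw [hW_smul _ (inv_nonneg.2 hΦf.le), hWΦ]
    ext v
    simp only [normalize, hWf, Pi.smul_apply, smul_eq_mul, ← mul_sum, f.2.2.1, mul_one, inv_inv]
    field_simp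
  right_inv u := by
    have hM := sum_pos_of_ne_zero hΦ_smul hW_nonneg hΦW (ne_zero_of_mem_sphere one_ne_zero u)
    have hu : ‖(u : E)‖ = 1 := by simp
    ext1
    simp only [normalize, hΦ_smul _ (inv_nonneg.2 hM.le), hΦW, norm_smul, hu, norm_inv,
      Real.norm_eq_abs, abs_of_pos hM, mul_one, inv_inv, smul_smul]
    rw [mul_inv_cancel₀ hM.ne', one_smul]
  continuous_toFun := by
    refine Continuous.subtype_mk (((hΦ.comp continuous_subtype_val).norm.inv₀ fun f =>
      (norm_pos_iff.2 (map_ne_zero hW_smul hWΦ f)).ne').smul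
      (hΦ.comp continuous_subtype_val)) _
  continuous_invFun := by
    refine Continuous.subtype_mk ((((continuous_finsetSum _ fun v _ =>
      (continuous_apply v).comp (hW.comp continuous_subtype_val))).inv₀ fun u =>
      (sum_pos_of_ne_zero hΦ_smul hW_nonneg hΦW (ne_zero_of_mem_sphere one_ne_zero u)).ne').smul
      (hW.comp continuous_subtype_val)) _

end sphere

end GeomReal

lemma subset_pair_cases {α : Type*} [DecidableEq α] {s : Finset α} {x y : α}
    (h : s ⊆ {x, y}) : s = ∅ ∨ s = {x} ∨ s = {y} ∨ s = {x, y} := by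
  have := mem_powerset.2 h
  simp only [powerset_insert, mem_union, mem_powerset, subset_singleton_iff, mem_image,
    exists_eq_or_imp, insert_empty_eq, ↓existsAndEq, true_and] at this
  rcases this with (h | h) | h | h
  exacts [Or.inl h, Or.inr (Or.inr (Or.inl h)), Or.inr (Or.inl h.symm),
    Or.inr (Or.inr (Or.inr h.symm))]

section PentComplex

variable {n : ℕ}

/-- The ordered pairs spanning a missing edge of the flag complex `K'`: the antipodal pairs
`{i, n + i}` (for `i = n - 1, n` these are diagonals of the pentagon) and the three other diagonals
of the pentagon. -/
def PentNonEdge (n a b : ℕ) : Prop :=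
  (a ≤ n ∧ b = n + a) ∨ (a = n - 1 ∧ b = 2 * n) ∨ (b = 2 * n + 1 ∧ (a = n ∨ a = 2 * n - 1))

lemma pentCyc_face_iff {c : Finset ℕ} :
    (c = ∅ ∨ (∃ a ∈ pentCyc n, c = {a}) ∨ c ∈ pentEdges n) ↔ ∃ e ∈ pentEdges n, c ⊆ e := by
  constructor
  · rintro (rfl | ⟨a, ha, rfl⟩ | hc)
    · exact ⟨{n - 1, n}, by simp [pentEdges], empty_subset _⟩
    · simp only [pentCyc, mem_insert, mem_singleton] at ha
      rcases ha with h | h | h | h | h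
      exacts [⟨{n - 1, n}, by simp [pentEdges], by simp [h]⟩,
        ⟨{n - 1, n}, by simp [pentEdges], by simp [h]⟩,
        ⟨{n, 2 * n - 1}, by simp [pentEdges], by simp [h]⟩,
        ⟨{2 * n - 1, 2 * n}, by simp [pentEdges], by simp [h]⟩,
        ⟨{2 * n, 2 * n + 1}, by simp [pentEdges], by simp [h]⟩]
    · exact ⟨c, hc, subset_refl c⟩
  · rintro ⟨e, he, hce⟩
    obtain ⟨x, hx, y, hy, rfl⟩ : ∃ x ∈ pentCyc n, ∃ y ∈ pentCyc n, e = {x, y} := by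
      simp only [pentEdges, mem_insert, mem_singleton] at he
      rcases he with rfl | rfl | rfl | rfl | rfl <;>
        exact ⟨_, by simp [pentCyc], _, by simp [pentCyc], rfl⟩
    rcases subset_pair_cases hce with h | h | h | h
    exacts [Or.inl h, Or.inr (Or.inl ⟨x, hx, h⟩), Or.inr (Or.inl ⟨y, hy, h⟩),
      Or.inr (Or.inr (h ▸ he))]

lemma exists_pentEdges_superset {t : Finset ℕ} (h : ∀ a ∈ t, ∀ b ∈ t, ¬PentNonEdge n a b) :
    ∃ e ∈ pentEdges n, t ∩ pentCyc n ⊆ e := by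
  have absent : ∀ {x z}, x ∉ t → z ∈ t → z ≠ x := fun hx hz he => hx (he ▸ hz)
  by_cases h5 : 2 * n + 1 ∈ t <;> by_cases h1 : n - 1 ∈ t
  · refine ⟨{2 * n + 1, n - 1}, by simp [pentEdges], fun z hz => ?_⟩
    obtain ⟨hzt, hzc⟩ := mem_inter.1 hz
    have e1 := h z hzt _ h5; have e2 := h _ h1 z hzt
    simp only [pentCyc, mem_insert, mem_singleton, PentNonEdge, true_and] at hzc e1 e2 ⊢; omega
  · refine ⟨{2 * n, 2 * n + 1}, by simp [pentEdges], fun z hz => ?_⟩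
    obtain ⟨hzt, hzc⟩ := mem_inter.1 hz
    have e1 := h z hzt _ h5; have e2 := absent h1 hzt
    simp only [pentCyc, mem_insert, mem_singleton, PentNonEdge, true_and] at hzc e1 ⊢; omega
  · refine ⟨{n - 1, n}, by simp [pentEdges], fun z hz => ?_⟩
    obtain ⟨hzt, hzc⟩ := mem_inter.1 hz
    have e1 := h _ h1 z hzt; have e2 := absent h5 hzt
    simp only [pentCyc, mem_insert, mem_singleton, PentNonEdge, true_and] at hzc e1 ⊢; omega
  by_cases h4 : 2 * n ∈ t
  · refine ⟨{2 * n - 1, 2 * n}, by simp [pentEdges], fun z hz => ?_⟩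
    obtain ⟨hzt, hzc⟩ := mem_inter.1 hz
    have e1 := h z hzt _ h4; have e2 := absent h5 hzt; have e3 := absent h1 hzt
    simp only [pentCyc, mem_insert, mem_singleton, PentNonEdge] at hzc e1 ⊢; omega
  · refine ⟨{n, 2 * n - 1}, by simp [pentEdges], fun z hz => ?_⟩
    obtain ⟨hzt, hzc⟩ := mem_inter.1 hz
    have e1 := absent h5 hzt; have e2 := absent h1 hzt; have e3 := absent h4 hzt
    simp only [pentCyc, mem_insert, mem_singleton] at hzc ⊢; omega

theorem pentFace_iff (hn : 2 ≤ n) {t : Finset ℕ} :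
    pentFace n t ↔ t ⊆ Icc 1 (2 * n + 1) ∧ ∀ a ∈ t, ∀ b ∈ t, ¬PentNonEdge n a b := by
  constructor
  · rintro ⟨hsub, hanti, hcyc⟩
    refine ⟨hsub, fun a ha b hb hab => ?_⟩
    obtain ⟨e, he, hte⟩ := pentCyc_face_iff.1 hcyc
    by_cases hab_cyc : a ∈ pentCyc n ∧ b ∈ pentCyc n
    · have hae := hte (mem_inter.2 ⟨ha, hab_cyc.1⟩)
      have hbe := hte (mem_inter.2 ⟨hb, hab_cyc.2⟩)
      simp only [pentEdges, mem_insert, mem_singleton] at he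
      unfold PentNonEdge at hab
      rcases he with rfl | rfl | rfl | rfl | rfl <;>
        simp only [mem_insert, mem_singleton] at hae hbe <;> omega
    · have ha1 := (mem_Icc.1 (hsub ha)).1
      simp only [pentCyc, mem_insert, mem_singleton] at hab_cyc
      unfold PentNonEdge at hab
      obtain ⟨hi, rfl⟩ : a ≤ n - 2 ∧ b = n + a := by omega
      exact hanti a (mem_Icc.2 ⟨ha1, hi⟩) ⟨ha, hb⟩
  · rintro ⟨hsub, hflag⟩
    refine ⟨hsub, fun i hi hmem => hflag i hmem.1 (n + i) hmem.2 (Or.inl ⟨?_, rfl⟩),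
      pentCyc_face_iff.2 (exists_pentEdges_superset hflag)⟩
    have := (mem_Icc.1 hi).2; omega

lemma mem_chi'Supp {T : Finset ℕ} (hT : T ⊆ Icc 1 n) {j : ℕ} :
    j ∈ chi'Supp n T ↔ j ∈ T ∨ (n < j ∧ j - n ∈ T) ∨ (j = 2 * n + 1 ∧ ¬Even #T) := by
  have hT' : ∀ i ∈ T, 1 ≤ i ∧ i ≤ n := fun i hi => mem_Icc.1 (hT hi)
  simp only [chi'Supp, chi'Entry, mem_filter, mem_Icc, sum_boole, ne_eq,
    ZMod.natCast_eq_zero_iff_even]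
  by_cases hj : j = 2 * n + 1
  · rw [filter_true_of_mem fun i _ => Or.inr (Or.inr hj)]
    have hjT : j ∉ T := fun h => by have := hT' j h; omega
    have hjnT : j - n ∉ T := fun h => by have := hT' _ h; omega
    subst hj
    simp [hjT, hjnT]
  · rw [filter_congr (q := (· = if j ≤ n then j else j - n)) fun i hi => by
      have := hT' i hi; split_ifs <;> omega, filter_eq']
    by_cases hjn : j ≤ n
    · by_cases hjT : j ∈ T
      · have := hT' j hjT; simp [hjn, hjT]; omega
      · simp [hjn, hjT, hj]
    · by_cases hjT : j - n ∈ T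
      · have := hT' _ hjT; simp [hjn, hjT]; omega
      · have : j ∉ T := fun h => hjn (hT' j h).2
        simp [hjn, hjT, hj, this]

lemma chi'Supp_subset (T : Finset ℕ) : chi'Supp n T ⊆ Icc 1 (2 * n + 1) := filter_subset _ _

abbrev InducedPentFace (n : ℕ) (T t : Finset ℕ) : Prop := pentFace n t ∧ t ⊆ chi'Supp n T

variable {T : Finset ℕ}

lemma inducedPentFace_iff (hn : 2 ≤ n) {t : Finset ℕ} :
    InducedPentFace n T t ↔
      t ⊆ chi'Supp n T ∧ ∀ a ∈ t, ∀ b ∈ t, ¬PentNonEdge n a b := by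
  rw [InducedPentFace, pentFace_iff hn]
  exact ⟨fun h => ⟨h.2, h.1.2⟩, fun h => ⟨⟨h.1.trans (chi'Supp_subset T), h.2⟩, h.1⟩⟩

lemma antitone_inducedPentFace (hn : 2 ≤ n) : Antitone (InducedPentFace n T) := by
  intro s t hst hs
  rw [inducedPentFace_iff hn] at hs ⊢
  exact ⟨hst.trans hs.1, fun a ha b hb => hs.2 a (hst ha) b (hst hb)⟩

lemma inducedPentFace_insert (hn : 2 ≤ n) {s : Finset ℕ} {b : ℕ}
    (hs : InducedPentFace n T s) (hb : b ∈ chi'Supp n T)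
    (hsb : ∀ a ∈ s, ¬PentNonEdge n a b ∧ ¬PentNonEdge n b a) :
    InducedPentFace n T (insert b s) := by
  rw [inducedPentFace_iff hn] at hs ⊢
  refine ⟨insert_subset hb hs.1, fun x hx y hy => ?_⟩
  rw [mem_insert] at hx hy
  rcases hx with rfl | hx <;> rcases hy with rfl | hy
  · unfold PentNonEdge; omega
  · exact (hsb y hy).2
  · exact (hsb x hx).1
  · exact hs.2 x hx y hy

def IsFaceWeight (n : ℕ) (T : Finset ℕ) (x : ℕ → ℝ) : Prop :=
  (∀ j, x j ≠ 0 → j ∈ chi'Supp n T) ∧ ∀ a b, PentNonEdge n a b → x a = 0 ∨ x b = 0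

lemma inducedPentFace_weightSupport_iff (hn : 2 ≤ n) {m : ℕ} {f : Fin m → ℝ} :
    InducedPentFace n T (GeomReal.weightSupport f) ↔ IsFaceWeight n T (GeomReal.zeroExtend f) := by
  simp only [inducedPentFace_iff hn, IsFaceWeight, subset_iff, GeomReal.mem_weightSupport]
  refine and_congr_right fun _ => ⟨fun h a b hab => ?_, fun h a ha b hb hab => ?_⟩
  · by_contra! h'
    exact h a h'.1 b h'.2 hab
  · exact (h a b hab).elim ha hb

end PentComplex

section EvenCase

open GeomReal

variable {n : ℕ} {T : Finset ℕ}

lemma last_notMem_chi'Supp (hT : T ⊆ Icc 1 n) (heven : Even #T) : 2 * n + 1 ∉ chi'Supp n T := by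
  rw [mem_chi'Supp hT]
  rintro (h | ⟨-, h⟩ | ⟨-, h⟩)
  · have := (mem_Icc.1 (hT h)).2; omega
  · have := (mem_Icc.1 (hT h)).2; omega
  · exact h heven

lemma inducedPentFace_insert_pred_two_mul (hn : 2 ≤ n) (hT : T ⊆ Icc 1 n) (h1 : n - 1 ∈ T)
    (heven : Even #T) {s : Finset ℕ} (hs : InducedPentFace n T s) (h2n : 2 * n ∈ s) :
    InducedPentFace n T (insert (2 * n - 1) s) := by
  have hb : 2 * n - 1 ∈ chi'Supp n T := (mem_chi'Supp hT).2 (Or.inr (Or.inl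
    ⟨by omega, by rwa [show 2 * n - 1 - n = n - 1 by omega]⟩))
  refine inducedPentFace_insert hn hs hb fun z hz => ?_
  have : z ≠ n - 1 := fun h => ((inducedPentFace_iff hn).1 hs).2 z hz _ h2n
    (Or.inr (Or.inl ⟨h, rfl⟩))
  have : z ≠ 2 * n + 1 := fun h => last_notMem_chi'Supp hT heven (h ▸ hs.2 hz)
  unfold PentNonEdge; omega

lemma inducedPentFace_insert_self (hn : 2 ≤ n) (hT : T ⊆ Icc 1 n) (h2 : n ∈ T)
    (heven : Even #T) {s : Finset ℕ} (hs : InducedPentFace n T s) (h2n : 2 * n ∉ s) :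
    InducedPentFace n T (insert n s) := by
  refine inducedPentFace_insert hn hs ((mem_chi'Supp hT).2 (Or.inl h2)) fun z hz => ?_
  have : z ≠ 0 := fun h => by have := (mem_Icc.1 (chi'Supp_subset T (hs.2 hz))).1; omega
  have : z ≠ 2 * n := fun h => h2n (h ▸ hz)
  have : z ≠ 2 * n + 1 := fun h => last_notMem_chi'Supp hT heven (h ▸ hs.2 hz)
  unfold PentNonEdge; omega

theorem contractibleSpace_of_even (hn : 2 ≤ n) (hT : T ⊆ Icc 1 n) (h1 : n - 1 ∈ T) (h2 : n ∈ T)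
    (heven : Even #T) : ContractibleSpace (GeomReal (2 * n + 2) (InducedPentFace n T)) := by
  have hK := antitone_inducedPentFace (T := T) hn
  let a : Fin (2 * n + 2) := ⟨2 * n, by omega⟩
  let b : Fin (2 * n + 2) := ⟨2 * n - 1, by omega⟩
  let c : Fin (2 * n + 2) := ⟨n, by omega⟩
  have hab (f : GeomReal (2 * n + 2) (InducedPentFace n T)) (hfa : f.1 a ≠ 0) :
      InducedPentFace n T (insert (b : ℕ) (weightSupport f.1)) :=
    inducedPentFace_insert_pred_two_mul hn hT h1 heven f.2.2.2 (val_mem_weightSupport.2 hfa)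
  have hc : InducedPentFace n T {(c : ℕ)} := by
    simpa using inducedPentFace_insert_self hn hT h2 heven (s := ∅)
      (by simp [InducedPentFace, pentFace]) (notMem_empty _)
  have hstar (f) : InducedPentFace n T
      (weightSupport (moveMassMap hK a b hab f).1 ∪ weightSupport (vertex c hc).1) := by
    rw [weightSupport_vertex, union_singleton]
    refine inducedPentFace_insert_self hn hT h2 heven (moveMassMap hK a b hab f).2.2.2 fun h => ?_
    exact (val_mem_weightSupport (v := a)).1 h
      (moveMass_apply_self (by simp [a, b, Fin.ext_iff]; omega) _)
  exact (contractible_iff_id_nullhomotopic _).2 ⟨vertex c hc,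
    (id_homotopic_moveMassMap hK a b hab).trans (homotopic_of_face_union hK _ _ hstar)⟩

end EvenCase

lemma posPart_sub_eq_and_negPart_sub_eq {p q : ℝ} (hp : 0 ≤ p) (hq : 0 ≤ q) (h : p = 0 ∨ q = 0) :
    (p - q)⁺ = p ∧ (p - q)⁻ = q := by
  rcases h with rfl | rfl
  · simp [hq]
  · simp [hp]

/-- Subdividing the edge `{e₁, -e₂}` of the square by `e₁ - e₂`: the weights `a₁, a₂, b₁, b₂, c`
of the vertices `e₁, -e₁, e₂, -e₂, e₁ - e₂` of a face are recovered from the point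
`(a₁ - a₂ + c, b₁ - b₂ - c)` they span. -/
lemma stellar_weights {a₁ a₂ b₁ b₂ c : ℝ} (ha₁ : 0 ≤ a₁) (ha₂ : 0 ≤ a₂) (hb₁ : 0 ≤ b₁)
    (hb₂ : 0 ≤ b₂) (hc : 0 ≤ c) (h₁ : a₁ = 0 ∨ a₂ = 0) (h₂ : b₁ = 0 ∨ b₂ = 0)
    (h₃ : a₁ = 0 ∨ b₂ = 0) (h₄ : b₁ = 0 ∨ c = 0) (h₅ : a₂ = 0 ∨ c = 0) :
    (a₁ - a₂ + c)⁺ = a₁ + c ∧ (a₁ - a₂ + c)⁻ = a₂ ∧ (b₁ - b₂ - c)⁺ = b₁ ∧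
      (b₁ - b₂ - c)⁻ = b₂ + c ∧ min (a₁ + c) (b₂ + c) = c := by
  rcases eq_or_ne c 0 with rfl | hc0
  · obtain ⟨ha, ha'⟩ := posPart_sub_eq_and_negPart_sub_eq ha₁ ha₂ h₁
    obtain ⟨hb, hb'⟩ := posPart_sub_eq_and_negPart_sub_eq hb₁ hb₂ h₂
    simp only [add_zero, sub_zero, ha, ha', hb, hb', true_and]
    rcases h₃ with rfl | rfl
    · exact min_eq_left hb₂
    · exact min_eq_right ha₁
  · obtain rfl := h₄.resolve_right hc0
    obtain rfl := h₅.resolve_right hc0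
    simp only [sub_zero, zero_sub]
    refine ⟨posPart_eq_self.2 (by positivity), negPart_eq_zero.2 (by positivity),
      posPart_eq_zero.2 (by linarith), by rw [negPart_eq_neg.2 (by linarith)]; ring, ?_⟩
    rcases h₃ with rfl | rfl <;> simp [hb₂, ha₁]

section FanCoordinates

variable {n : ℕ}

/-- The `i`-th coordinate of `∑ⱼ xⱼ vⱼ`, where `vᵢ = eᵢ`, `v_{n+i} = -eᵢ` and
`v_{2n+1} = e_{n-1} - e_n`. -/
def pentProj (n : ℕ) (x : ℕ → ℝ) (i : ℕ) : ℝ :=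
  x i - x (n + i) + (if i = n - 1 then x (2 * n + 1) else 0) - (if i = n then x (2 * n + 1) else 0)

def stellarWeight (n : ℕ) (y : ℕ → ℝ) : ℝ := min (y (n - 1))⁺ (y n)⁻

def pentCoord (n : ℕ) (y : ℕ → ℝ) (j : ℕ) : ℝ :=
  if j = n - 1 then (y (n - 1))⁺ - stellarWeight n y
  else if j = 2 * n then (y n)⁻ - stellarWeight n y
  else if j = 2 * n + 1 then stellarWeight n y
  else if 1 ≤ j ∧ j ≤ n then (y j)⁺
  else if n < j ∧ j ≤ 2 * n then (y (j - n))⁻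
  else 0

variable (y : ℕ → ℝ)

lemma pentCoord_pred : pentCoord n y (n - 1) = (y (n - 1))⁺ - stellarWeight n y := if_pos rfl

lemma pentCoord_two_mul (hn : 1 ≤ n) : pentCoord n y (2 * n) = (y n)⁻ - stellarWeight n y := by
  unfold pentCoord; split_ifs <;> first | rfl | omega

lemma pentCoord_last : pentCoord n y (2 * n + 1) = stellarWeight n y := by
  unfold pentCoord; split_ifs <;> first | rfl | omega

lemma pentCoord_of_le {j : ℕ} (hj : 1 ≤ j) (hjn : j ≤ n) (hj' : j ≠ n - 1) :
    pentCoord n y j = (y j)⁺ := by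
  unfold pentCoord; split_ifs <;> first | rfl | omega

lemma pentCoord_add {i : ℕ} (hi : 1 ≤ i) (hin : i < n) : pentCoord n y (n + i) = (y i)⁻ := by
  unfold pentCoord; split_ifs <;> first | simp | omega

lemma pentCoord_of_notMem (hn : 2 ≤ n) {j : ℕ} (hj : j ∉ Icc 1 (2 * n + 1)) :
    pentCoord n y j = 0 := by
  rw [mem_Icc] at hj
  unfold pentCoord; split_ifs <;> first | rfl | omega

lemma stellarWeight_nonneg : 0 ≤ stellarWeight n y := le_min (posPart_nonneg _) (negPart_nonneg _)

lemma pentCoord_nonneg (j : ℕ) : 0 ≤ pentCoord n y j := by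
  have h₁ : stellarWeight n y ≤ (y (n - 1))⁺ := min_le_left _ _
  have h₂ : stellarWeight n y ≤ (y n)⁻ := min_le_right _ _
  unfold pentCoord
  split_ifs
  exacts [sub_nonneg.2 h₁, sub_nonneg.2 h₂, stellarWeight_nonneg y, posPart_nonneg _,
    negPart_nonneg _, le_rfl]

lemma pentCoord_congr {y' : ℕ → ℝ} (h : ∀ i, 1 ≤ i → i ≤ n → y i = y' i) (hn : 2 ≤ n) :
    pentCoord n y = pentCoord n y' := by
  have hpred := h (n - 1) (by omega) (by omega)
  have hlast := h n (by omega) le_rfl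
  funext j
  unfold pentCoord stellarWeight
  rw [hpred, hlast]
  split_ifs with h₁ h₂ h₃ h₄ h₅
  · rfl
  · rfl
  · rfl
  · rw [h j h₄.1 h₄.2]
  · rw [h (j - n) (by omega) (by omega)]
  · rfl

lemma continuous_pentCoord (j : ℕ) : Continuous fun y : ℕ → ℝ => pentCoord n y j := by
  unfold pentCoord stellarWeight
  split_ifs <;> fun_prop

lemma pentCoord_smul {c : ℝ} (hc : 0 ≤ c) : pentCoord n (c • y) = c • pentCoord n y := by
  have hpos : ∀ a : ℝ, (c * a)⁺ = c * a⁺ := fun a => by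
    simp only [posPart_def, max_def]; split_ifs <;> nlinarith
  have hneg : ∀ a : ℝ, (c * a)⁻ = c * a⁻ := fun a => by
    simp only [negPart_def, max_def]; split_ifs <;> nlinarith
  funext j
  simp only [pentCoord, stellarWeight, Pi.smul_apply, smul_eq_mul, hpos, hneg,
    ← mul_min_of_nonneg _ _ hc]
  split_ifs <;> ring

lemma pentProj_pentCoord (hn : 2 ≤ n) {i : ℕ} (hi : 1 ≤ i) (hin : i ≤ n) :
    pentProj n (pentCoord n y) i = y i := by
  unfold pentProj
  rw [pentCoord_last]
  rcases (by omega : n - 1 = i ∨ i = n ∨ i < n - 1) with rfl | hi' | hi'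
  · rw [pentCoord_pred, pentCoord_add y hi (by omega), if_pos rfl, if_neg (by omega)]
    linarith [posPart_sub_negPart (y (n - 1))]
  · rw [hi', pentCoord_of_le y (by omega) le_rfl (by omega), ← two_mul,
      pentCoord_two_mul y (by omega), if_neg (by omega), if_pos rfl]
    linarith [posPart_sub_negPart (y n)]
  · rw [pentCoord_of_le y hi hin (by omega), pentCoord_add y hi (by omega), if_neg (by omega),
      if_neg (by omega)]
    linarith [posPart_sub_negPart (y i)]

lemma pentCoord_mem_chi'Supp (hn : 2 ≤ n) {T : Finset ℕ} (hT : T ⊆ Icc 1 n) (hodd : ¬Even #T)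
    (hy : ∀ i, y i ≠ 0 → i ∈ T) {j : ℕ} (hj : pentCoord n y j ≠ 0) : j ∈ chi'Supp n T := by
  have hj0 : j ∈ Icc 1 (2 * n + 1) := by
    by_contra h
    exact hj (pentCoord_of_notMem y hn h)
  rw [mem_Icc] at hj0
  rw [mem_chi'Supp hT]
  rcases (by omega : n - 1 = j ∨ j = 2 * n ∨ j = 2 * n + 1 ∨ (j ≤ n ∧ j ≠ n - 1) ∨
    (n < j ∧ j < 2 * n)) with rfl | rfl | h | h | h
  · refine Or.inl (hy _ fun h0 => hj ?_)
    simp [pentCoord_pred, stellarWeight, h0]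
  · refine Or.inr (Or.inl ⟨by omega, ?_⟩)
    rw [show 2 * n - n = n by omega]
    refine hy _ fun h0 => hj ?_
    simp [pentCoord_two_mul y (by omega : 1 ≤ n), stellarWeight, h0]
  · exact Or.inr (Or.inr ⟨h, hodd⟩)
  · refine Or.inl (hy _ fun h0 => hj ?_)
    simp [pentCoord_of_le y hj0.1 h.1 h.2, h0]
  · obtain ⟨i, rfl⟩ : ∃ i, j = n + i := ⟨j - n, by omega⟩
    refine Or.inr (Or.inl ⟨h.1, ?_⟩)
    rw [Nat.add_sub_cancel_left]
    refine hy _ fun h0 => hj ?_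
    simp [pentCoord_add y (by omega : 1 ≤ i) (by omega : i < n), h0]

lemma pentCoord_nonEdge (hn : 2 ≤ n) {a b : ℕ} (hab : PentNonEdge n a b) :
    pentCoord n y a = 0 ∨ pentCoord n y b = 0 := by
  have hpred : pentCoord n y (2 * n - 1) = (y (n - 1))⁻ := by
    rw [show 2 * n - 1 = n + (n - 1) by omega, pentCoord_add y (by omega) (by omega)]
  have hzero_of_pred : y (n - 1) ≤ 0 → stellarWeight n y = 0 := fun h => by
    simp [stellarWeight, posPart_eq_zero.2 h]
  have hzero_of_self : 0 ≤ y n → stellarWeight n y = 0 := fun h => by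
    simp [stellarWeight, negPart_eq_zero.2 h]
  rcases hab with ⟨ha, rfl⟩ | ⟨rfl, rfl⟩ | ⟨rfl, ha | rfl⟩
  · rcases (by omega : a = 0 ∨ n - 1 = a ∨ n = a ∨ (1 ≤ a ∧ a < n - 1)) with rfl | rfl | rfl | h
    · exact Or.inl (pentCoord_of_notMem y hn (by simp))
    · rw [show n + (n - 1) = 2 * n - 1 by omega, hpred, pentCoord_pred]
      rcases le_total (y (n - 1)) 0 with h | h
      · simp [posPart_eq_zero.2 h, hzero_of_pred h]
      · exact Or.inr (negPart_eq_zero.2 h)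
    · rw [← two_mul, pentCoord_two_mul y (by omega), pentCoord_of_le y (by omega) le_rfl (by omega)]
      rcases le_total (y n) 0 with h | h
      · exact Or.inl (posPart_eq_zero.2 h)
      · simp [negPart_eq_zero.2 h, hzero_of_self h]
    · rw [pentCoord_of_le y h.1 (by omega) (by omega), pentCoord_add y h.1 (by omega)]
      rcases le_total (y a) 0 with h | h
      · exact Or.inl (posPart_eq_zero.2 h)
      · exact Or.inr (negPart_eq_zero.2 h)
  · rw [pentCoord_pred, pentCoord_two_mul y (by omega), stellarWeight]
    rcases le_total (y (n - 1))⁺ (y n)⁻ with h | h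
    · simp [min_eq_left h]
    · simp [min_eq_right h]
  · rw [ha, pentCoord_of_le y (by omega) le_rfl (by omega), pentCoord_last]
    rcases le_total (y n) 0 with h | h
    · exact Or.inl (posPart_eq_zero.2 h)
    · exact Or.inr (hzero_of_self h)
  · rw [hpred, pentCoord_last]
    rcases le_total (y (n - 1)) 0 with h | h
    · exact Or.inr (hzero_of_pred h)
    · exact Or.inl (negPart_eq_zero.2 h)

section pentProj

variable (x : ℕ → ℝ)

lemma pentProj_pred (hn : 1 ≤ n) :
    pentProj n x (n - 1) = x (n - 1) - x (2 * n - 1) + x (2 * n + 1) := by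
  simp [pentProj, show n + (n - 1) = 2 * n - 1 by omega, show n - 1 ≠ n by omega]

lemma pentProj_self (hn : 1 ≤ n) : pentProj n x n = x n - x (2 * n) - x (2 * n + 1) := by
  simp [pentProj, ← two_mul, show n ≠ n - 1 by omega]

lemma pentProj_of_lt {i : ℕ} (hi : i < n - 1) : pentProj n x i = x i - x (n + i) := by
  simp [pentProj, show i ≠ n - 1 by omega, show i ≠ n by omega]

lemma pentCoord_pentProj (hn : 2 ≤ n) {T : Finset ℕ} (hx0 : ∀ j, 0 ≤ x j)
    (hx : IsFaceWeight n T x) : pentCoord n (pentProj n x) = x := by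
  obtain ⟨hsupp, hpair⟩ := hx
  obtain ⟨ha, ha', hb, hb', hs⟩ := stellar_weights (hx0 (n - 1)) (hx0 (2 * n - 1)) (hx0 n)
    (hx0 (2 * n)) (hx0 (2 * n + 1)) (hpair _ _ (Or.inl ⟨by omega, by omega⟩))
    (hpair _ _ (Or.inl ⟨le_rfl, by omega⟩)) (hpair _ _ (Or.inr (Or.inl ⟨rfl, rfl⟩)))
    (hpair _ _ (Or.inr (Or.inr ⟨rfl, Or.inl rfl⟩)))
    (hpair _ _ (Or.inr (Or.inr ⟨rfl, Or.inr rfl⟩)))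
  have hsw : stellarWeight n (pentProj n x) = x (2 * n + 1) := by
    rw [stellarWeight, pentProj_pred x (by omega), pentProj_self x (by omega), ha, hb', hs]
  have hcross : ∀ i, 1 ≤ i → i < n - 1 → (pentProj n x i)⁺ = x i ∧ (pentProj n x i)⁻ = x (n + i) :=
    fun i hi hin => by
      rw [pentProj_of_lt x hin]
      exact posPart_sub_eq_and_negPart_sub_eq (hx0 _) (hx0 _) (hpair _ _ (Or.inl ⟨by omega, rfl⟩))
  funext j
  by_cases hj0 : j ∈ Icc 1 (2 * n + 1)
  swap
  · rw [pentCoord_of_notMem _ hn hj0]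
    by_contra h
    exact hj0 (chi'Supp_subset T (hsupp j (Ne.symm h)))
  rw [mem_Icc] at hj0
  rcases (by omega : n - 1 = j ∨ j = 2 * n ∨ j = 2 * n + 1 ∨ n = j ∨ j < n - 1 ∨ j = 2 * n - 1 ∨
    (n < j ∧ j < 2 * n - 1)) with rfl | rfl | rfl | rfl | h | rfl | h
  · rw [pentCoord_pred, pentProj_pred x (by omega), ha, hsw, add_sub_cancel_right]
  · rw [pentCoord_two_mul _ (by omega), pentProj_self x (by omega), hb', hsw, add_sub_cancel_right]
  · rw [pentCoord_last, hsw]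
  · rw [pentCoord_of_le _ hj0.1 le_rfl (by omega), pentProj_self x (by omega), hb]
  · rw [pentCoord_of_le _ hj0.1 (by omega) (by omega), (hcross j hj0.1 h).1]
  · rw [show 2 * n - 1 = n + (n - 1) by omega, pentCoord_add _ (by omega) (by omega),
      pentProj_pred x (by omega), ha', show n + (n - 1) = 2 * n - 1 by omega]
  · obtain ⟨i, rfl⟩ : ∃ i, j = n + i := ⟨j - n, by omega⟩
    rw [pentCoord_add _ (by omega) (by omega), (hcross i (by omega) (by omega)).2]

end pentProj

end FanCoordinates

section OddCase

open GeomReal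

variable (n : ℕ) (T : Finset ℕ)

def natFunOfEuclidean (u : EuclideanSpace ℝ (Fin #T)) (j : ℕ) : ℝ :=
  if h : j ∈ T then u (T.equivFin ⟨j, h⟩) else 0

def pentMap (f : Fin (2 * n + 2) → ℝ) : EuclideanSpace ℝ (Fin #T) :=
  WithLp.toLp 2 fun k => pentProj n (zeroExtend f) (T.equivFin.symm k)

def pentSection (u : EuclideanSpace ℝ (Fin #T)) : Fin (2 * n + 2) → ℝ :=
  fun v => pentCoord n (natFunOfEuclidean T u) v

variable {n T}

lemma continuous_pentMap : Continuous (pentMap n T) := by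
  refine (PiLp.continuous_toLp 2 _).comp (continuous_pi fun k => ?_)
  have := continuous_zeroExtend_apply (m := 2 * n + 2)
  unfold pentProj
  split_ifs <;> fun_prop

lemma pentMap_smul (c : ℝ) (f : Fin (2 * n + 2) → ℝ) : pentMap n T (c • f) = c • pentMap n T f := by
  ext k
  simp only [pentMap, pentProj, zeroExtend, PiLp.toLp_apply, PiLp.smul_apply, Pi.smul_apply,
    smul_eq_mul]
  split_ifs <;> ring

lemma continuous_natFunOfEuclidean : Continuous (natFunOfEuclidean T) := by
  refine continuous_pi fun j => ?_
  unfold natFunOfEuclidean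
  split_ifs <;> fun_prop

lemma continuous_pentSection : Continuous (pentSection n T) :=
  continuous_pi fun v => (continuous_pentCoord v).comp continuous_natFunOfEuclidean

lemma pentSection_smul {c : ℝ} (hc : 0 ≤ c) (u : EuclideanSpace ℝ (Fin #T)) :
    pentSection n T (c • u) = c • pentSection n T u := by
  have : natFunOfEuclidean T (c • u) = c • natFunOfEuclidean T u := by
    funext j
    simp only [natFunOfEuclidean, PiLp.smul_apply, Pi.smul_apply, smul_eq_mul]
    split_ifs <;> simp
  funext v
  simp [pentSection, this, pentCoord_smul _ hc]

lemma zeroExtend_pentSection (hn : 2 ≤ n) (u : EuclideanSpace ℝ (Fin #T)) :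
    zeroExtend (pentSection n T u) = pentCoord n (natFunOfEuclidean T u) := by
  funext j
  unfold zeroExtend pentSection
  split_ifs with h
  · rfl
  · exact (pentCoord_of_notMem _ hn fun hj => h (by have := (mem_Icc.1 hj).2; omega)).symm

variable (hn : 2 ≤ n) (hT : T ⊆ Icc 1 n)
include hn hT

lemma pentMap_pentSection (u : EuclideanSpace ℝ (Fin #T)) :
    pentMap n T (pentSection n T u) = u := by
  ext k
  have hk := mem_Icc.1 (hT (T.equivFin.symm k).2)
  rw [pentMap, PiLp.toLp_apply, zeroExtend_pentSection hn, pentProj_pentCoord _ hn hk.1 hk.2,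
    natFunOfEuclidean, dif_pos (T.equivFin.symm k).2]
  simp

lemma inducedPentFace_pentSection (hodd : ¬Even #T) (u : EuclideanSpace ℝ (Fin #T)) :
    InducedPentFace n T (weightSupport (pentSection n T u)) := by
  rw [inducedPentFace_weightSupport_iff hn, zeroExtend_pentSection hn]
  refine ⟨fun j hj => pentCoord_mem_chi'Supp _ hn hT hodd (fun i hi => ?_) hj,
    fun a b hab => pentCoord_nonEdge _ hn hab⟩
  by_contra hiT
  exact hi (dif_neg hiT)

lemma pentSection_pentMap (h1 : n - 1 ∈ T) (h2 : n ∈ T)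
    (f : GeomReal (2 * n + 2) (InducedPentFace n T)) : pentSection n T (pentMap n T f.1) = f.1 := by
  have hx := (inducedPentFace_weightSupport_iff hn).1 f.2.2.2
  have hx0 : ∀ j, 0 ≤ zeroExtend f.1 j := fun j => by
    unfold zeroExtend; split_ifs; exacts [f.2.1 _, le_rfl]
  have hoff : ∀ i, 1 ≤ i → i ≤ n → i ∉ T → pentProj n (zeroExtend f.1) i = 0 := by
    intro i hi hin hiT
    have hx_i : ∀ j, j ∉ chi'Supp n T → zeroExtend f.1 j = 0 := fun j hj => by
      by_contra h; exact hj (hx.1 j h)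
    have hlt : i < n - 1 := by
      have : i ≠ n - 1 := fun h => hiT (h ▸ h1)
      have : i ≠ n := fun h => hiT (h ▸ h2)
      omega
    have hnT : n + i ∉ T := fun h => by have := (mem_Icc.1 (hT h)).2; omega
    rw [pentProj_of_lt _ hlt, hx_i i ?_, hx_i (n + i) ?_, sub_zero] <;> rw [mem_chi'Supp hT]
    · simp [hnT, hiT]; omega
    · simp [hiT]; omega
  have hcongr : ∀ i, 1 ≤ i → i ≤ n →
      natFunOfEuclidean T (pentMap n T f.1) i = pentProj n (zeroExtend f.1) i := by
    intro i hi hin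
    by_cases hiT : i ∈ T
    · simp [natFunOfEuclidean, hiT, pentMap]
    · rw [natFunOfEuclidean, dif_neg hiT, hoff i hi hin hiT]
  funext v
  rw [pentSection, pentCoord_congr _ hcongr hn, pentCoord_pentProj _ hn hx0 hx, zeroExtend_val]

theorem nonempty_homeomorph_sphere_of_odd (h1 : n - 1 ∈ T) (h2 : n ∈ T) (hodd : ¬Even #T) :
    Nonempty (GeomReal (2 * n + 2) (InducedPentFace n T) ≃ₜ
      Metric.sphere (0 : EuclideanSpace ℝ (Fin #T)) 1) :=
  ⟨homeomorphSphere (pentMap n T) (pentSection n T) continuous_pentMap continuous_pentSection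
    (fun c _ f => pentMap_smul c f) (fun _ hc u => pentSection_smul hc u)
    (fun _ v => pentCoord_nonneg _ v) (inducedPentFace_pentSection hn hT hodd)
    (pentMap_pentSection hn hT) (pentSection_pentMap hn hT h1 h2)⟩

end OddCase

/-- Let `n ≥ 3` and `T ⊆ {1,…,n}` with `{n−1, n} ⊆ T`. If `|T|` is odd,
the realization of the induced subcomplex `K'_{χ',T}` is homotopy equivalent to
`S^{|T|−1}`; if `|T|` is even, it is contractible. -/
theorem geomReal_pent_subcomplex_both (n : ℕ) (hn : 3 ≤ n) (T : Finset ℕ)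
    (hT : T ⊆ Finset.Icc 1 n) (h1 : n - 1 ∈ T) (h2 : n ∈ T) :
    (¬ Even T.card →
      Nonempty (ContinuousMap.HomotopyEquiv
        (GeomReal (2 * n + 2) (fun t => pentFace n t ∧ t ⊆ chi'Supp n T))
        (Metric.sphere (0 : EuclideanSpace ℝ (Fin T.card)) 1))) ∧
    (Even T.card →
      ContractibleSpace
        (GeomReal (2 * n + 2) (fun t => pentFace n t ∧ t ⊆ chi'Supp n T))) :=
  ⟨fun hodd => (nonempty_homeomorph_sphere_of_odd (by omega) hT h1 h2 hodd).map
      Homeomorph.toHomotopyEquiv,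
    contractibleSpace_of_even (by omega) hT h1 h2⟩
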